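/- arXiv:2304.00817 — 4 statements merged into one kernel-verified Lean document; each statement's English description precedes it below -/
import Mathlib

section
/- For every finite digraph D = (V,E) and every edge temporalisation τ : E → ℕ, there exists an injective edge temporalisation τ' : E → ℕ such that every pair (u,v) with v temporally reachable from u under τ also has v temporally reachable from u under τ'. In particular, the maximum temporal reachability over all temporalisations is attained by an injective one. -/
/-- A temporal path in a digraph with edge relation `E` and temporalisation `τ`:
a nonempty list of edges of `E`, consecutive (head = next tail), from `u` to `v`,
with strictly increasing times. -/
def IsTemporalPath {V : Type*} (E : V → V → Prop) (τ : V × V → ℕ)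
    (u v : V) (p : List (V × V)) : Prop :=
  (∀ e ∈ p, E e.1 e.2) ∧
  (∃ e ∈ p.head?, e.1 = u) ∧
  (∃ e ∈ p.getLast?, e.2 = v) ∧
  p.Chain' (fun e f => e.2 = f.1) ∧
  p.Chain' (fun e f => τ e < τ f)

/-- `v` is temporally reachable from `u`. -/
def TReach {V : Type*} (E : V → V → Prop) (τ : V × V → ℕ) (u v : V) : Prop :=
  u = v ∨ ∃ p, IsTemporalPath E τ u v p

/-!
Break ties lexicographically: with `n` edges numbered `0, …, n - 1`, the time `n * τ e + index e`
is injective, and it keeps every strict inequality `τ e < τ f`, so every temporal path stays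
temporal.
-/

theorem exists_injective_of_lt_imp_lt {α : Type*} [Finite α] (τ : α → ℕ) :
    ∃ σ : α → ℕ, Function.Injective σ ∧ ∀ a b, τ a < τ b → σ a < σ b := by
  obtain ⟨n, ⟨ι⟩⟩ := Finite.exists_equiv_fin α
  let σ : α → ℕ := fun a => n * τ a + ι a
  have hlt : ∀ a b, τ a < τ b → σ a < σ b := fun a b hab =>
    calc n * τ a + ι a < n * (τ a + 1) := by
          rw [mul_add_one]; exact Nat.add_lt_add_left (ι a).isLt _
      _ ≤ n * τ b := Nat.mul_le_mul_left _ hab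
      _ ≤ σ b := Nat.le_add_right _ _
  refine ⟨σ, fun a b hab => ?_, hlt⟩
  have hτ : τ a = τ b := by
    rcases lt_trichotomy (τ a) (τ b) with h | h | h
    · exact absurd hab (hlt a b h).ne
    · exact h
    · exact absurd hab (hlt b a h).ne'
  exact ι.injective (Fin.ext (by simpa [σ, hτ] using hab))

section Retiming

variable {V : Type*} {E : V → V → Prop} {τ σ : V × V → ℕ}

theorem IsTemporalPath.of_lt_imp_lt (hτσ : ∀ e f, τ e < τ f → σ e < σ f) {u v : V}
    {p : List (V × V)} (hp : IsTemporalPath E τ u v p) : IsTemporalPath E σ u v p :=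
  let ⟨hE, hu, hv, hconn, htime⟩ := hp
  ⟨hE, hu, hv, hconn, htime.imp fun e f => hτσ e f⟩

theorem TReach.of_lt_imp_lt (hτσ : ∀ e f, τ e < τ f → σ e < σ f) {u v : V}
    (h : TReach E τ u v) : TReach E σ u v :=
  h.imp_right fun ⟨p, hp⟩ => ⟨p, hp.of_lt_imp_lt hτσ⟩

end Retiming

theorem stmt1 {V : Type*} [Fintype V] (E : V → V → Prop) (τ : V × V → ℕ) :
    ∃ τ' : V × V → ℕ, Set.InjOn τ' {e : V × V | E e.1 e.2} ∧
      (∀ u v : V, TReach E τ u v → TReach E τ' u v) ∧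
      {p : V × V | TReach E τ p.1 p.2}.ncard ≤
        {p : V × V | TReach E τ' p.1 p.2}.ncard := by
  obtain ⟨τ', hinj, hlt⟩ := exists_injective_of_lt_imp_lt τ
  have hreach : ∀ u v : V, TReach E τ u v → TReach E τ' u v :=
    fun _ _ h => h.of_lt_imp_lt hlt
  exact ⟨τ', hinj.injOn, hreach,
    Set.ncard_le_ncard (fun p hp => hreach p.1 p.2 hp) (Set.toFinite _)⟩
end

section
/- Let D = (V,E) be a digraph containing an in-arborescence T_in rooted at r spanning a set A ⊆ V and an out-arborescence T_out rooted at r spanning a set B ⊆ V, such that T_in and T_out are edge-disjoint. Then D admits an edge temporalisation under which every vertex of B is temporally reachable from every vertex of A; hence the temporal reachability of the resulting temporal graph is at least |A|·|B|. -/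
/-- `T` is (the edge relation of) an out-arborescence of the digraph `E`,
rooted at `r`, spanning the vertex set `B`. -/
structure IsOutArb {V : Type*} (E : V → V → Prop) (T : V → V → Prop)
    (r : V) (B : Set V) : Prop where
  sub : ∀ ⦃a b⦄, T a b → E a b
  mem : ∀ ⦃a b⦄, T a b → a ∈ B ∧ b ∈ B
  root : r ∈ B
  reach : ∀ v ∈ B, Relation.ReflTransGen T r v
  parent : ∀ v ∈ B, v ≠ r → ∃! u, T u v
  rootNoParent : ∀ u, ¬ T u r

/-- `T` is (the edge relation of) an in-arborescence of the digraph `E`,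
rooted at `r`, spanning the vertex set `B`. -/
structure IsInArb {V : Type*} (E : V → V → Prop) (T : V → V → Prop)
    (r : V) (B : Set V) : Prop where
  sub : ∀ ⦃a b⦄, T a b → E a b
  mem : ∀ ⦃a b⦄, T a b → a ∈ B ∧ b ∈ B
  root : r ∈ B
  reach : ∀ v ∈ B, Relation.ReflTransGen T v r
  child : ∀ v ∈ B, v ≠ r → ∃! u, T v u
  rootNoChild : ∀ u, ¬ T r u

open Relation Function

section TemporalPath

variable {V : Type*} {E : V → V → Prop} {τ : V × V → ℕ}

theorem isTemporalPath_singleton {u v : V} (h : E u v) : IsTemporalPath E τ u v [(u, v)] :=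
  ⟨by simpa using h, ⟨(u, v), rfl, rfl⟩, ⟨(u, v), rfl, rfl⟩, List.isChain_singleton _,
    List.isChain_singleton _⟩

theorem IsTemporalPath.append {u w v : V} {p q : List (V × V)}
    (hp : IsTemporalPath E τ u w p) (hq : IsTemporalPath E τ w v q)
    (hpq : ∀ e ∈ p.getLast?, ∀ f ∈ q.head?, τ e < τ f) :
    IsTemporalPath E τ u v (p ++ q) := by
  obtain ⟨hpE, ⟨e₀, he₀, rfl⟩, ⟨e₁, he₁, rfl⟩, hpc, hpτ⟩ := hp
  obtain ⟨hqE, ⟨f₀, hf₀, hf₀w⟩, ⟨f₁, hf₁, rfl⟩, hqc, hqτ⟩ := hq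
  refine ⟨fun e he => (List.mem_append.1 he).elim (hpE e) (hqE e),
    ⟨e₀, List.mem_head?_append_of_mem_head? he₀, rfl⟩,
    ⟨f₁, List.mem_getLast?_append_of_mem_getLast? hf₁, rfl⟩,
    List.IsChain.append hpc hqc ?_, List.IsChain.append hpτ hqτ hpq⟩
  intro e he f hf
  rw [Option.mem_unique he he₁, Option.mem_unique hf hf₀, hf₀w]

theorem exists_isTemporalPath_of_transGen {T : V → V → Prop} (hTE : ∀ ⦃x y⦄, T x y → E x y)
    (hτ : ∀ ⦃x y z⦄, T x y → T y z → τ (x, y) < τ (y, z)) {a b : V} (h : TransGen T a b) :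
    ∃ p, IsTemporalPath E τ a b p ∧ ∀ e ∈ p, T e.1 e.2 := by
  induction h using TransGen.head_induction_on with
  | single hab => exact ⟨_, isTemporalPath_singleton (hTE hab), by simpa using hab⟩
  | @head a c hac _ ih =>
    obtain ⟨p, hp, hpT⟩ := ih
    obtain ⟨f, hf, rfl⟩ := hp.2.1
    refine ⟨[(a, f.1)] ++ p, (isTemporalPath_singleton (hTE hac)).append hp ?_, ?_⟩
    · rintro e ⟨⟩ f' hf'
      rw [Option.mem_unique hf' hf]
      exact hτ hac (hpT f (List.mem_of_mem_head? hf))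
    · simpa only [List.singleton_append, List.forall_mem_cons] using ⟨hac, hpT⟩

theorem tReach_of_reflTransGen_of_reflTransGen {T₁ T₂ : V → V → Prop}
    (hT₁E : ∀ ⦃x y⦄, T₁ x y → E x y) (hT₂E : ∀ ⦃x y⦄, T₂ x y → E x y)
    (hτ₁ : ∀ ⦃x y z⦄, T₁ x y → T₁ y z → τ (x, y) < τ (y, z))
    (hτ₂ : ∀ ⦃x y z⦄, T₂ x y → T₂ y z → τ (x, y) < τ (y, z))
    (hτ₁₂ : ∀ ⦃x y z w⦄, T₁ x y → T₂ z w → τ (x, y) < τ (z, w))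
    {a c b : V} (hac : ReflTransGen T₁ a c) (hcb : ReflTransGen T₂ c b) : TReach E τ a b := by
  rcases reflTransGen_iff_eq_or_transGen.1 hac with rfl | hac
  · rcases reflTransGen_iff_eq_or_transGen.1 hcb with rfl | hcb
    · exact Or.inl rfl
    · exact Or.inr ((exists_isTemporalPath_of_transGen hT₂E hτ₂ hcb).imp fun _ => And.left)
  obtain ⟨p, hp, hpT⟩ := exists_isTemporalPath_of_transGen hT₁E hτ₁ hac
  rcases reflTransGen_iff_eq_or_transGen.1 hcb with rfl | hcb
  · exact Or.inr ⟨p, hp⟩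
  obtain ⟨q, hq, hqT⟩ := exists_isTemporalPath_of_transGen hT₂E hτ₂ hcb
  refine Or.inr ⟨p ++ q, hp.append hq fun e he f hf => ?_⟩
  exact hτ₁₂ (hpT e (List.mem_of_mem_getLast? he)) (hqT f (List.mem_of_mem_head? hf))

end TemporalPath

theorem not_transGen_self_of_functional_of_reflTransGen_sink {V : Type*} {T : V → V → Prop}
    {r a : V} (huniq : ∀ ⦃v x y⦄, T v x → T v y → x = y) (hr : ∀ u, ¬ T r u)
    (ha : ReflTransGen T a r) : ¬ TransGen T a a := by
  induction ha using ReflTransGen.head_induction_on with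
  | refl =>
    intro hcyc
    obtain ⟨x, hx, -⟩ := TransGen.head'_iff.1 hcyc
    exact hr x hx
  | head hac _ ih =>
    intro hcyc
    obtain ⟨x, hx, hxa⟩ := TransGen.head'_iff.1 hcyc
    obtain rfl := huniq hx hac
    exact ih (TransGen.tail' hxa hac)

section Arborescence

variable {V : Type*} {E T : V → V → Prop} {r : V} {A : Set V}

theorem IsOutArb.swap (h : IsOutArb E T r A) : IsInArb (swap E) (swap T) r A where
  sub _ _ hab := h.sub hab
  mem _ _ hab := (h.mem hab).symm
  root := h.root
  reach v hv := (h.reach v hv).swap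
  child v hv hvr := h.parent v hv hvr
  rootNoChild := h.rootNoParent

theorem IsInArb.eq_of_rel (h : IsInArb E T r A) {v x y : V} (hx : T v x) (hy : T v y) :
    x = y := by
  have hvr : v ≠ r := by rintro rfl; exact h.rootNoChild x hx
  obtain ⟨u, -, hu⟩ := h.child v (h.mem hx).1 hvr
  rw [hu x hx, hu y hy]

theorem IsInArb.not_reflTransGen_of_rel (h : IsInArb E T r A) {a b : V} (hab : T a b) :
    ¬ ReflTransGen T b a := fun hba =>
  not_transGen_self_of_functional_of_reflTransGen_sink (T := T) (fun _ _ _ => h.eq_of_rel)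
    h.rootNoChild (h.reach a (h.mem hab).1) (TransGen.head' hab hba)

theorem IsOutArb.not_reflTransGen_of_rel (h : IsOutArb E T r A) {a b : V} (hab : T a b) :
    ¬ ReflTransGen T b a := fun hba =>
  h.swap.not_reflTransGen_of_rel (a := b) (b := a) hab hba.swap

end Arborescence

section Temporalisation

variable {V : Type*}

noncomputable def predCard (T : V → V → Prop) (v : V) : ℕ :=
  {u | ReflTransGen T u v}.ncard

theorem predCard_le_card [Finite V] (T : V → V → Prop) (v : V) : predCard T v ≤ Nat.card V :=
  Set.ncard_le_card _

theorem predCard_lt_predCard [Finite V] {T : V → V → Prop} {a b : V} (hab : T a b)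
    (hba : ¬ ReflTransGen T b a) : predCard T a < predCard T b :=
  Set.ncard_lt_ncard ⟨fun _ hu => ReflTransGen.tail hu hab, fun hsub => hba (hsub .refl)⟩
    (Set.toFinite _)

open scoped Classical in
noncomputable def arbTemporalisation (Tin Tout : V → V → Prop) (e : V × V) : ℕ :=
  if Tin e.1 e.2 then predCard Tin e.2
  else if Tout e.1 e.2 then Nat.card V + predCard Tout e.2 else 0

variable {E Tin Tout : V → V → Prop} {r : V} {A B : Set V}

theorem arbTemporalisation_of_in {a b : V} (h : Tin a b) :
    arbTemporalisation Tin Tout (a, b) = predCard Tin b := by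
  simp [arbTemporalisation, h]

theorem arbTemporalisation_of_out (hdisj : ∀ a b, Tin a b → Tout a b → False) {a b : V}
    (h : Tout a b) : arbTemporalisation Tin Tout (a, b) = Nat.card V + predCard Tout b := by
  have hin : ¬ Tin a b := fun hin => hdisj a b hin h
  simp [arbTemporalisation, h, hin]

theorem arbTemporalisation_lt_of_in [Finite V] (hin : IsInArb E Tin r A) {x y z : V}
    (hxy : Tin x y) (hyz : Tin y z) :
    arbTemporalisation Tin Tout (x, y) < arbTemporalisation Tin Tout (y, z) := by
  rw [arbTemporalisation_of_in hxy, arbTemporalisation_of_in hyz]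
  exact predCard_lt_predCard hyz (hin.not_reflTransGen_of_rel hyz)

theorem arbTemporalisation_lt_of_out [Finite V] (hout : IsOutArb E Tout r B)
    (hdisj : ∀ a b, Tin a b → Tout a b → False) {x y z : V} (hxy : Tout x y) (hyz : Tout y z) :
    arbTemporalisation Tin Tout (x, y) < arbTemporalisation Tin Tout (y, z) := by
  rw [arbTemporalisation_of_out hdisj hxy, arbTemporalisation_of_out hdisj hyz]
  exact Nat.add_lt_add_left (predCard_lt_predCard hyz (hout.not_reflTransGen_of_rel hyz)) _

theorem arbTemporalisation_in_lt_out [Finite V] (hout : IsOutArb E Tout r B)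
    (hdisj : ∀ a b, Tin a b → Tout a b → False) {x y z w : V} (hxy : Tin x y) (hzw : Tout z w) :
    arbTemporalisation Tin Tout (x, y) < arbTemporalisation Tin Tout (z, w) := by
  rw [arbTemporalisation_of_in hxy, arbTemporalisation_of_out hdisj hzw]
  have := predCard_le_card Tin y
  have := predCard_lt_predCard hzw (hout.not_reflTransGen_of_rel hzw)
  omega

end Temporalisation

theorem stmt7 {V : Type*} [Fintype V] (E Tin Tout : V → V → Prop)
    (r : V) (A B : Set V)
    (hin : IsInArb E Tin r A) (hout : IsOutArb E Tout r B)
    (hdisj : ∀ a b, Tin a b → Tout a b → False) :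
    ∃ τ : V × V → ℕ, (∀ a ∈ A, ∀ b ∈ B, TReach E τ a b) ∧
      A.ncard * B.ncard ≤ {p : V × V | TReach E τ p.1 p.2}.ncard := by
  have hreach : ∀ a ∈ A, ∀ b ∈ B, TReach E (arbTemporalisation Tin Tout) a b := fun a ha b hb =>
    tReach_of_reflTransGen_of_reflTransGen hin.sub hout.sub
      (fun _ _ _ => arbTemporalisation_lt_of_in hin)
      (fun _ _ _ => arbTemporalisation_lt_of_out hout hdisj)
      (fun _ _ _ _ => arbTemporalisation_in_lt_out hout hdisj)
      (hin.reach a ha) (hout.reach b hb)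
  refine ⟨arbTemporalisation Tin Tout, hreach, ?_⟩
  rw [← Set.ncard_prod]
  exact Set.ncard_le_ncard (fun p hp => hreach p.1 hp.1 p.2 hp.2) (Set.toFinite _)
end

section
/- Every strongly connected digraph D on n ≥ 2 vertices that contains a directed Hamiltonian cycle admits an edge temporalisation whose temporal reachability (number of ordered pairs (u,v) with v temporally reachable from u) is at least (⌊n/2⌋ + 1)·(⌈n/2⌉ + 1) ≥ n²/4. -/
/-!
Number the vertices along the Hamiltonian cycle as `0, …, n - 1` and give every cycle edge the
number of its tail as its time. Walking along the cycle from vertex `a` to vertex `m`, for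
`a ≤ m ≤ n` (vertex `n` being vertex `0` again), then uses strictly increasing times. With the
root `r = ⌊n/2⌋`, each of the `r + 1` vertices `0, …, r` therefore reaches each of the `n - r + 1`
vertices `r, …, n`, which are distinct because `r ≥ 1`.
-/

theorem TReach.of_increasing_walk {V : Type*} {E : V → V → Prop} {τ : V × V → ℕ}
    (f : ℕ → V) (k : ℕ) (hE : ∀ i < k, E (f i) (f (i + 1)))
    (hτ : ∀ i, i + 1 < k → τ (f i, f (i + 1)) < τ (f (i + 1), f (i + 2))) :
    TReach E τ (f 0) (f k) := by
  cases k with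
  | zero => exact Or.inl rfl
  | succ k =>
    refine Or.inr ⟨(List.range (k + 1)).map fun i => (f i, f (i + 1)), ?_, ?_, ?_, ?_, ?_⟩
    · simpa using hE
    · simp [List.head?_range]
    · simp [List.getLast?_range]
    · exact (List.isChain_map _).2 ((List.isChain_range_succ _ _).2 fun _ _ => rfl)
    · exact (List.isChain_map _).2 ((List.isChain_range_succ _ _).2 fun i hi => hτ i (by omega))

section Cycle

variable {V : Type*} {n : ℕ} (σ : Fin n ≃ V) (hn : 0 < n)

def cycleVertex (i : ℕ) : V := σ ⟨i % n, Nat.mod_lt _ hn⟩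

variable {σ hn}

theorem cycleVertex_injOn_Ico (a : ℕ) : Set.InjOn (cycleVertex σ hn) (Set.Ico a (a + n)) := by
  intro i hi j hj hij
  have hmod : i % n = j % n := congrArg Fin.val (σ.injective hij)
  simp only [Set.mem_Ico] at hi hj
  rcases le_total i j with h | h
  · have := Nat.eq_zero_of_dvd_of_lt ((Nat.modEq_iff_dvd' h).1 hmod) (by omega); omega
  · have := Nat.eq_zero_of_dvd_of_lt ((Nat.modEq_iff_dvd' h).1 hmod.symm) (by omega); omega

theorem cycleVertex_adj {E : V → V → Prop}
    (hham : ∀ i : Fin n, E (σ i) (σ ⟨((i : ℕ) + 1) % n, Nat.mod_lt _ hn⟩)) (i : ℕ) :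
    E (cycleVertex σ hn i) (cycleVertex σ hn (i + 1)) := by
  simpa [cycleVertex, Nat.add_mod] using hham ⟨i % n, Nat.mod_lt _ hn⟩

theorem treach_cycleVertex {E : V → V → Prop}
    (hham : ∀ i : Fin n, E (σ i) (σ ⟨((i : ℕ) + 1) % n, Nat.mod_lt _ hn⟩)) {a m : ℕ}
    (ham : a ≤ m) (hm : m ≤ n) :
    TReach E (fun e => σ.symm e.1) (cycleVertex σ hn a) (cycleVertex σ hn m) := by
  have hτ : ∀ i < n, ((σ.symm (cycleVertex σ hn i) : Fin n) : ℕ) = i := fun i hi => by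
    simp [cycleVertex, Nat.mod_eq_of_lt hi]
  have := TReach.of_increasing_walk (E := E) (τ := fun e => σ.symm e.1)
    (fun i => cycleVertex σ hn (a + i)) (m - a) (fun i _ => cycleVertex_adj hham _)
    fun i hi => by
      simp only [hτ _ (by omega : a + i < n), hτ _ (by omega : a + (i + 1) < n)]
      omega
  rwa [Nat.add_sub_cancel' ham] at this

theorem le_ncard_treach_cycleVertex {E : V → V → Prop}
    (hham : ∀ i : Fin n, E (σ i) (σ ⟨((i : ℕ) + 1) % n, Nat.mod_lt _ hn⟩)) {r : ℕ}
    (hr : 0 < r) (hrn : r < n) :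
    (r + 1) * (n - r + 1) ≤ {p : V × V | TReach E (fun e => σ.symm e.1) p.1 p.2}.ncard := by
  classical
  have : Finite V := .of_equiv _ σ
  set A := (Finset.range (r + 1)).image (cycleVertex σ hn)
  set B := (Finset.Icc r n).image (cycleVertex σ hn)
  have hA : A.card = r + 1 := by
    rw [Finset.card_image_of_injOn, Finset.card_range]
    refine (cycleVertex_injOn_Ico 0).mono fun i hi => ?_
    simp only [Finset.coe_range, Set.mem_Iio] at hi
    simp only [Set.mem_Ico]; omega
  have hB : B.card = n - r + 1 := by
    rw [Finset.card_image_of_injOn, Nat.card_Icc]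
    · omega
    refine (cycleVertex_injOn_Ico 1).mono fun i hi => ?_
    simp only [Finset.coe_Icc, Set.mem_Icc] at hi
    simp only [Set.mem_Ico]; omega
  have hsub : ((A ×ˢ B : Finset (V × V)) : Set (V × V)) ⊆
      {p : V × V | TReach E (fun e => σ.symm e.1) p.1 p.2} := by
    intro p hp
    simp only [Finset.coe_product, Set.mem_prod, Finset.coe_image, Set.mem_image,
      Finset.coe_range, Set.mem_Iio, Finset.coe_Icc, Set.mem_Icc, A, B] at hp
    obtain ⟨⟨a, ha, hpa⟩, ⟨m, hm, hpm⟩⟩ := hp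
    rw [Set.mem_ofPred_eq, ← hpa, ← hpm]
    exact treach_cycleVertex hham (by omega) hm.2
  calc (r + 1) * (n - r + 1) = (A ×ˢ B).card := by rw [Finset.card_product, hA, hB]
    _ = ((A ×ˢ B : Finset (V × V)) : Set (V × V)).ncard := (Set.ncard_coe_finset _).symm
    _ ≤ _ := Set.ncard_le_ncard hsub

end Cycle

theorem sq_div_four_le (n : ℕ) : n ^ 2 / 4 ≤ (n / 2 + 1) * ((n + 1) / 2 + 1) := by
  refine Nat.div_le_of_le_mul ?_
  calc n ^ 2 = n * n := sq n
    _ ≤ (2 * (n / 2 + 1)) * (2 * ((n + 1) / 2 + 1)) := Nat.mul_le_mul (by omega) (by omega)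
    _ = 4 * ((n / 2 + 1) * ((n + 1) / 2 + 1)) := by ring

theorem stmt13 {V : Type*} (E : V → V → Prop) (n : ℕ)
    (hn : 2 ≤ n)
    (σ : Fin n ≃ V)
    (hham : ∀ i : Fin n, E (σ i) (σ ⟨((i : ℕ) + 1) % n, Nat.mod_lt _ (by omega)⟩)) :
    ∃ τ : V × V → ℕ,
      (n / 2 + 1) * ((n + 1) / 2 + 1) ≤ {p : V × V | TReach E τ p.1 p.2}.ncard ∧
      n ^ 2 / 4 ≤ (n / 2 + 1) * ((n + 1) / 2 + 1) := by
  refine ⟨fun e => σ.symm e.1, ?_, sq_div_four_le n⟩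
  have hsplit : (n + 1) / 2 = n - n / 2 := by omega
  rw [hsplit]
  exact le_ncard_treach_cycleVertex (hn := by omega) hham (by omega) (by omega)
end

section
/- For every integer k ≥ 1, consider the digraph G_k with vertex set {x, y, x₁, y₁, x₂, y₂, x₃, y₃} ∪ {z_{i,j} : 1 ≤ i ≤ 3, 1 ≤ j ≤ k} and edge set {(x,y)} ∪ {(y,x_i), (x_i,y_i), (y_i,x), (y_i,z_{i,1}), (z_{i,k},x_i) : 1 ≤ i ≤ 3} ∪ {(z_{i,j}, z_{i,j+1}) : 1 ≤ i ≤ 3, 1 ≤ j < k}. Then G_k is strongly connected, has n = 3k + 8 vertices, and for every vertex r and every pair of edge-disjoint out-arborescence and in-arborescence of G_k rooted at r, the smaller of the two arborescences spans at most k + 8 vertices (which is n/3 + O(1)). -/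
/-- The vertex set of the digraph `G_k` of Figure 3. -/
inductive Vtx (k : ℕ) where
  | x : Vtx k
  | y : Vtx k
  | xi : Fin 3 → Vtx k
  | yi : Fin 3 → Vtx k
  | z : Fin 3 → Fin k → Vtx k
  deriving DecidableEq

/-- The edge relation of the digraph `G_k`. -/
def Ek (k : ℕ) : Vtx k → Vtx k → Prop := fun a b =>
  (a = .x ∧ b = .y) ∨
  (∃ i, a = .y ∧ b = .xi i) ∨
  (∃ i, a = .xi i ∧ b = .yi i) ∨
  (∃ i, a = .yi i ∧ b = .x) ∨
  (∃ i, ∃ h : 0 < k, a = .yi i ∧ b = .z i ⟨0, h⟩) ∨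
  (∃ i, ∃ h : 0 < k, a = .z i ⟨k - 1, Nat.sub_lt h Nat.one_pos⟩ ∧ b = .xi i) ∨
  (∃ i, ∃ j : Fin k, ∃ h : (j : ℕ) + 1 < k, a = .z i j ∧ b = .z i ⟨(j : ℕ) + 1, h⟩)


section Aux

private lemma crossRTG {V : Type*} {T : V → V → Prop} {a b : V} (S : Set V)
    (h : Relation.ReflTransGen T a b) (ha : a ∉ S) :
    b ∈ S → ∃ u w, T u w ∧ u ∉ S ∧ w ∈ S := by
  induction h with
  | refl => exact fun hb => absurd hb ha
  | @tail m c h₁ h₂ ih =>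
    intro hc
    by_cases hm : m ∈ S
    · exact ih hm
    · exact ⟨m, c, h₂, hm, hc⟩

private lemma crossRTG' {V : Type*} {T : V → V → Prop} {a b : V} (S : Set V)
    (h : Relation.ReflTransGen T a b) (ha : a ∈ S) (hb : b ∉ S) :
    ∃ u w, T u w ∧ u ∈ S ∧ w ∉ S := by
  obtain ⟨u, w, hT, hu, hw⟩ := crossRTG Sᶜ h (by simpa using ha) (by simpa using hb)
  exact ⟨u, w, hT, by simpa using hu, by simpa using hw⟩

private def vtxEquiv (k : ℕ) : Vtx k ≃ (Unit ⊕ Unit ⊕ Fin 3 ⊕ Fin 3 ⊕ Fin 3 × Fin k) where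
  toFun v := match v with
    | .x => .inl ()
    | .y => .inr (.inl ())
    | .xi i => .inr (.inr (.inl i))
    | .yi i => .inr (.inr (.inr (.inl i)))
    | .z i j => .inr (.inr (.inr (.inr (i, j))))
  invFun s := match s with
    | .inl _ => .x
    | .inr (.inl _) => .y
    | .inr (.inr (.inl i)) => .xi i
    | .inr (.inr (.inr (.inl i))) => .yi i
    | .inr (.inr (.inr (.inr (i, j)))) => .z i j
  left_inv v := by cases v <;> rfl
  right_inv s := by rcases s with _ | (_ | (_ | (_ | ⟨i, j⟩))) <;> rfl

noncomputable instance (k : ℕ) : Fintype (Vtx k) := Fintype.ofEquiv _ (vtxEquiv k).symm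

private lemma vtxCard (k : ℕ) : Nat.card (Vtx k) = 3 * k + 8 := by
  rw [Nat.card_congr (vtxEquiv k)]
  simp [Nat.card_eq_fintype_card]
  ring

/-- the set `{y_i} ∪ chain_i`; its only entering edge is `x_i → y_i`. -/
private def Sy (k : ℕ) (i : Fin 3) : Set (Vtx k) :=
  insert (.yi i) (Set.range (Vtx.z i))

/-- the set `{x_i} ∪ chain_i`; its only exiting edge is `x_i → y_i`. -/
private def Sx (k : ℕ) (i : Fin 3) : Set (Vtx k) :=
  insert (.xi i) (Set.range (Vtx.z i))

/-- the branch `{x_i, y_i} ∪ chain_i`. -/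
private def Sbr (k : ℕ) (i : Fin 3) : Set (Vtx k) :=
  insert (.xi i) (insert (.yi i) (Set.range (Vtx.z i)))

private lemma enterSy {k : ℕ} {i : Fin 3} {u w : Vtx k} (hE : Ek k u w)
    (hu : u ∉ Sy k i) (hw : w ∈ Sy k i) : u = .xi i ∧ w = .yi i := by
  rcases hE with ⟨rfl, rfl⟩ | ⟨i', rfl, rfl⟩ | ⟨i', rfl, rfl⟩ | ⟨i', rfl, rfl⟩ |
    ⟨i', h0, rfl, rfl⟩ | ⟨i', h0, rfl, rfl⟩ | ⟨i', j, hj, rfl, rfl⟩ <;>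
    simp_all [Sy]

private lemma exitSx {k : ℕ} {i : Fin 3} {u w : Vtx k} (hE : Ek k u w)
    (hu : u ∈ Sx k i) (hw : w ∉ Sx k i) : u = .xi i ∧ w = .yi i := by
  rcases hE with ⟨rfl, rfl⟩ | ⟨i', rfl, rfl⟩ | ⟨i', rfl, rfl⟩ | ⟨i', rfl, rfl⟩ |
    ⟨i', h0, rfl, rfl⟩ | ⟨i', h0, rfl, rfl⟩ | ⟨i', j, hj, rfl, rfl⟩ <;>
    simp_all [Sx]

private lemma enterSbr {k : ℕ} {i : Fin 3} {u w : Vtx k} (hE : Ek k u w)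
    (hu : u ∉ Sbr k i) (hw : w ∈ Sbr k i) : u = .y ∧ w = .xi i := by
  rcases hE with ⟨rfl, rfl⟩ | ⟨i', rfl, rfl⟩ | ⟨i', rfl, rfl⟩ | ⟨i', rfl, rfl⟩ |
    ⟨i', h0, rfl, rfl⟩ | ⟨i', h0, rfl, rfl⟩ | ⟨i', j, hj, rfl, rfl⟩ <;>
    simp_all [Sbr]

private lemma exitSbr {k : ℕ} {i : Fin 3} {u w : Vtx k} (hE : Ek k u w)
    (hu : u ∈ Sbr k i) (hw : w ∉ Sbr k i) : u = .yi i ∧ w = .x := by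
  rcases hE with ⟨rfl, rfl⟩ | ⟨i', rfl, rfl⟩ | ⟨i', rfl, rfl⟩ | ⟨i', rfl, rfl⟩ |
    ⟨i', h0, rfl, rfl⟩ | ⟨i', h0, rfl, rfl⟩ | ⟨i', j, hj, rfl, rfl⟩ <;>
    simp_all [Sbr]

private lemma inY {k : ℕ} {u : Vtx k} (hE : Ek k u .y) : u = .x := by
  rcases hE with ⟨rfl, h⟩ | ⟨i', rfl, h⟩ | ⟨i', rfl, h⟩ | ⟨i', rfl, h⟩ |
    ⟨i', h0, rfl, h⟩ | ⟨i', h0, rfl, h⟩ | ⟨i', j, hj, rfl, h⟩ <;> simp_all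

private lemma outX {k : ℕ} {w : Vtx k} (hE : Ek k .x w) : w = .y := by
  rcases hE with ⟨h, rfl⟩ | ⟨i', h, rfl⟩ | ⟨i', h, rfl⟩ | ⟨i', h, rfl⟩ |
    ⟨i', h0, h, rfl⟩ | ⟨i', h0, h, rfl⟩ | ⟨i', j, hj, h, rfl⟩ <;> simp_all

private lemma pick3 : ∀ i₁ i₂ i₃ i₄ : Fin 3, i₁ ≠ i₂ → i₃ ≠ i₄ →
    i₁ = i₃ ∨ i₁ = i₄ ∨ i₂ = i₃ ∨ i₂ = i₄ := by decide

private def Full (k : ℕ) (i : Fin 3) : Set (Vtx k) :=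
  insert .x (insert .y (Set.range Vtx.xi ∪ Set.range Vtx.yi ∪ Set.range (Vtx.z i)))

private lemma full_card (k : ℕ) (i : Fin 3) : (Full k i).ncard ≤ k + 8 := by
  have hr : ∀ {α : Type} [Fintype α] (f : α → Vtx k),
      (Set.range f).ncard ≤ Fintype.card α := by
    intro α _ f
    rw [← Set.image_univ]
    calc (f '' Set.univ).ncard ≤ (Set.univ : Set α).ncard := Set.ncard_image_le Set.finite_univ
      _ = Fintype.card α := by simp [Set.ncard_univ, Nat.card_eq_fintype_card]
  have h1 : (Set.range (Vtx.xi : Fin 3 → Vtx k) ∪ Set.range Vtx.yi ∪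
      Set.range (Vtx.z i)).ncard ≤ k + 6 := by
    calc (Set.range (Vtx.xi : Fin 3 → Vtx k) ∪ Set.range Vtx.yi ∪
        Set.range (Vtx.z i)).ncard
        ≤ (Set.range (Vtx.xi : Fin 3 → Vtx k) ∪ Set.range Vtx.yi).ncard +
          (Set.range (Vtx.z i)).ncard := Set.ncard_union_le _ _
      _ ≤ ((Set.range (Vtx.xi : Fin 3 → Vtx k)).ncard +
          (Set.range (Vtx.yi : Fin 3 → Vtx k)).ncard) +
          (Set.range (Vtx.z i)).ncard := by
            gcongr
            exact Set.ncard_union_le _ _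
      _ ≤ (3 + 3) + k := by
            gcongr
            · simpa using hr (Vtx.xi : Fin 3 → Vtx k)
            · simpa using hr (Vtx.yi : Fin 3 → Vtx k)
            · simpa using hr (Vtx.z i)
      _ = k + 6 := by ring
  have h2 := Set.ncard_insert_le (Vtx.y)
    (Set.range (Vtx.xi : Fin 3 → Vtx k) ∪ Set.range Vtx.yi ∪ Set.range (Vtx.z i))
  have h3 := Set.ncard_insert_le (Vtx.x) (insert Vtx.y
    (Set.range (Vtx.xi : Fin 3 → Vtx k) ∪ Set.range Vtx.yi ∪ Set.range (Vtx.z i)))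
  unfold Full
  omega

private lemma two_chains {k : ℕ} (B : Set (Vtx k)) (hB : k + 9 ≤ B.ncard) :
    ∃ i₁ i₂ : Fin 3, i₁ ≠ i₂ ∧ (∃ j, Vtx.z i₁ j ∈ B) ∧ (∃ j, Vtx.z i₂ j ∈ B) := by
  by_contra hc
  push_neg at hc
  have hsub : ∃ i, B ⊆ Full k i := by
    by_cases hT : ∃ i j, Vtx.z i j ∈ B
    · obtain ⟨i, j₀, hij⟩ := hT
      refine ⟨i, fun v hv => ?_⟩
      cases v with
      | x => exact Set.mem_insert _ _
      | y => exact Set.mem_insert_iff.2 (Or.inr (Set.mem_insert _ _))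
      | xi i' => exact Set.mem_insert_iff.2 (Or.inr (Set.mem_insert_iff.2
          (Or.inr (Or.inl (Or.inl ⟨i', rfl⟩)))))
      | yi i' => exact Set.mem_insert_iff.2 (Or.inr (Set.mem_insert_iff.2
          (Or.inr (Or.inl (Or.inr ⟨i', rfl⟩)))))
      | z i' j' =>
        by_cases hii : i' = i
        · subst hii
          exact Set.mem_insert_iff.2 (Or.inr (Set.mem_insert_iff.2
            (Or.inr (Or.inr ⟨j', rfl⟩))))
        · exact absurd hij (hc i' i hii ⟨j', hv⟩ j₀)
    · push_neg at hT
      refine ⟨0, fun v hv => ?_⟩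
      cases v with
      | x => exact Set.mem_insert _ _
      | y => exact Set.mem_insert_iff.2 (Or.inr (Set.mem_insert _ _))
      | xi i' => exact Set.mem_insert_iff.2 (Or.inr (Set.mem_insert_iff.2
          (Or.inr (Or.inl (Or.inl ⟨i', rfl⟩)))))
      | yi i' => exact Set.mem_insert_iff.2 (Or.inr (Set.mem_insert_iff.2
          (Or.inr (Or.inl (Or.inr ⟨i', rfl⟩)))))
      | z i' j' => exact absurd hv (hT i' j')
  obtain ⟨i, hsub⟩ := hsub
  have := (Set.ncard_le_ncard hsub (Full k i).toFinite).trans (full_card k i)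
  omega

end Aux

theorem stmt14 (k : ℕ) (hk : 1 ≤ k) :
    (∀ u v : Vtx k, Relation.ReflTransGen (Ek k) u v) ∧
    Nat.card (Vtx k) = 3 * k + 8 ∧
    (∀ (r : Vtx k) (Tout Tin : Vtx k → Vtx k → Prop) (Bout Bin : Set (Vtx k)),
      IsOutArb (Ek k) Tout r Bout → IsInArb (Ek k) Tin r Bin →
      (∀ a b, Tout a b → Tin a b → False) →
      min Bout.ncard Bin.ncard ≤ k + 8) := by
  have hk0 : 0 < k := hk
  -- basic edges
  have exy : Ek k .x .y := Or.inl ⟨rfl, rfl⟩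
  have eyxi : ∀ i, Ek k .y (.xi i) := fun i => Or.inr (Or.inl ⟨i, rfl, rfl⟩)
  have exiyi : ∀ i, Ek k (.xi i) (.yi i) := fun i => Or.inr (Or.inr (Or.inl ⟨i, rfl, rfl⟩))
  have eyix : ∀ i, Ek k (.yi i) .x := fun i =>
    Or.inr (Or.inr (Or.inr (Or.inl ⟨i, rfl, rfl⟩)))
  have eyiz : ∀ i, Ek k (.yi i) (.z i ⟨0, hk0⟩) := fun i =>
    Or.inr (Or.inr (Or.inr (Or.inr (Or.inl ⟨i, hk0, rfl, rfl⟩))))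
  have ezxi : ∀ i, Ek k (.z i ⟨k - 1, Nat.sub_lt hk0 Nat.one_pos⟩) (.xi i) := fun i =>
    Or.inr (Or.inr (Or.inr (Or.inr (Or.inr (Or.inl ⟨i, hk0, rfl, rfl⟩)))))
  have ezz : ∀ i (j : Fin k) (h : (j : ℕ) + 1 < k),
      Ek k (.z i j) (.z i ⟨(j : ℕ) + 1, h⟩) := fun i j h =>
    Or.inr (Or.inr (Or.inr (Or.inr (Or.inr (Or.inr ⟨i, j, h, rfl, rfl⟩)))))
  have zreach : ∀ (i : Fin 3) (j : Fin k) (m : ℕ) (hm : m < k), (j : ℕ) ≤ m →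
      Relation.ReflTransGen (Ek k) (.z i j) (.z i ⟨m, hm⟩) := by
    intro i j m
    induction m with
    | zero =>
      intro hm hj
      have hj0 : j = ⟨0, hm⟩ := Fin.ext (Nat.le_zero.mp hj)
      rw [hj0]
    | succ n ih =>
      intro hm hj
      rcases Nat.lt_or_ge (j : ℕ) (n + 1) with h | h
      · have hn : n < k := by omega
        exact (ih hn (by omega)).tail (ezz i ⟨n, hn⟩ hm)
      · have hj1 : j = ⟨n + 1, hm⟩ := Fin.ext (show (j : ℕ) = n + 1 by omega)
        rw [hj1]
  have toX : ∀ v : Vtx k, Relation.ReflTransGen (Ek k) v .x := by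
    intro v
    cases v with
    | x => exact Relation.ReflTransGen.refl
    | y => exact ((Relation.ReflTransGen.single (eyxi 0)).tail (exiyi 0)).tail (eyix 0)
    | xi i => exact (Relation.ReflTransGen.single (exiyi i)).tail (eyix i)
    | yi i => exact Relation.ReflTransGen.single (eyix i)
    | z i j =>
      have hjlt := j.isLt
      have h1 : (j : ℕ) ≤ k - 1 := by omega
      exact (((zreach i j (k - 1) (Nat.sub_lt hk0 Nat.one_pos) h1).tail (ezxi i)).tail
        (exiyi i)).tail (eyix i)
  have fromX : ∀ v : Vtx k, Relation.ReflTransGen (Ek k) .x v := by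
    intro v
    cases v with
    | x => exact Relation.ReflTransGen.refl
    | y => exact Relation.ReflTransGen.single exy
    | xi i => exact (Relation.ReflTransGen.single exy).tail (eyxi i)
    | yi i => exact ((Relation.ReflTransGen.single exy).tail (eyxi i)).tail (exiyi i)
    | z i j =>
      have base := (((Relation.ReflTransGen.single exy).tail (eyxi i)).tail
        (exiyi i)).tail (eyiz i)
      have h2 := zreach i ⟨0, hk0⟩ (j : ℕ) j.isLt (Nat.zero_le _)
      exact base.trans h2
  refine ⟨fun u v => (toX u).trans (fromX v), vtxCard k, ?_⟩
  intro r Tout Tin Bout Bin hout hin hdisj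
  by_contra hmin
  push_neg at hmin
  obtain ⟨hm1, hm2⟩ := lt_min_iff.mp hmin
  have hBout : k + 9 ≤ Bout.ncard := by omega
  have hBin : k + 9 ≤ Bin.ncard := by omega
  obtain ⟨i₁, i₂, h12, ⟨j₁, hj₁⟩, ⟨j₂, hj₂⟩⟩ := two_chains Bout hBout
  obtain ⟨i₃, i₄, h34, ⟨j₃, hj₃⟩, ⟨j₄, hj₄⟩⟩ := two_chains Bin hBin
  -- structural lemmas
  have outXiYi : ∀ (i : Fin 3) (j : Fin k), r ∉ Sy k i → Vtx.z i j ∈ Bout →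
      Tout (.xi i) (.yi i) := by
    intro i j hr hmem
    obtain ⟨u, w, hT, hu, hw⟩ := crossRTG (Sy k i) (hout.reach _ hmem) hr
      (Set.mem_insert_iff.2 (Or.inr ⟨j, rfl⟩))
    obtain ⟨rfl, rfl⟩ := enterSy (hout.sub hT) hu hw
    exact hT
  have inXiYi : ∀ (i : Fin 3) (j : Fin k), r ∉ Sx k i → Vtx.z i j ∈ Bin →
      Tin (.xi i) (.yi i) := by
    intro i j hr hmem
    obtain ⟨u, w, hT, hu, hw⟩ := crossRTG' (Sx k i) (hin.reach _ hmem)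
      (Set.mem_insert_iff.2 (Or.inr ⟨j, rfl⟩)) hr
    obtain ⟨rfl, rfl⟩ := exitSx (hin.sub hT) hu hw
    exact hT
  have outXY : ∀ (i : Fin 3) (j : Fin k), r ∉ Sbr k i → r ≠ .y → Vtx.z i j ∈ Bout →
      Tout .x .y := by
    intro i j hr hry hmem
    obtain ⟨u, w, hT, hu, hw⟩ := crossRTG (Sbr k i) (hout.reach _ hmem) hr
      (Set.mem_insert_iff.2 (Or.inr (Set.mem_insert_iff.2 (Or.inr ⟨j, rfl⟩))))
    obtain ⟨rfl, rfl⟩ := enterSbr (hout.sub hT) hu hw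
    have hyB : Vtx.y ∈ Bout := (hout.mem hT).1
    obtain ⟨u', hu', -⟩ := hout.parent _ hyB (Ne.symm hry)
    have hux : u' = Vtx.x := inY (hout.sub hu')
    rw [hux] at hu'
    exact hu'
  have inXY : ∀ (i : Fin 3) (j : Fin k), r ∉ Sbr k i → r ≠ .x → Vtx.z i j ∈ Bin →
      Tin .x .y := by
    intro i j hr hrx hmem
    obtain ⟨u, w, hT, hu, hw⟩ := crossRTG' (Sbr k i) (hin.reach _ hmem)
      (Set.mem_insert_iff.2 (Or.inr (Set.mem_insert_iff.2 (Or.inr ⟨j, rfl⟩)))) hr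
    obtain ⟨rfl, rfl⟩ := exitSbr (hin.sub hT) hu hw
    have hxB : Vtx.x ∈ Bin := (hin.mem hT).2
    obtain ⟨w', hw', -⟩ := hin.child _ hxB (Ne.symm hrx)
    have hwy : w' = Vtx.y := outX (hin.sub hw')
    rw [hwy] at hw'
    exact hw'
  have branchCase : ∀ i₀ : Fin 3, (∀ i : Fin 3, i ≠ i₀ → r ∉ Sbr k i) →
      r ≠ .x → r ≠ .y → False := by
    intro i₀ hnbr hrx hry
    have hia : ∃ i, i ≠ i₀ ∧ ∃ j, Vtx.z i j ∈ Bout := by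
      by_cases h : i₁ = i₀
      · exact ⟨i₂, by rw [← h]; exact h12.symm, j₂, hj₂⟩
      · exact ⟨i₁, h, j₁, hj₁⟩
    have hib : ∃ i, i ≠ i₀ ∧ ∃ j, Vtx.z i j ∈ Bin := by
      by_cases h : i₃ = i₀
      · exact ⟨i₄, by rw [← h]; exact h34.symm, j₄, hj₄⟩
      · exact ⟨i₃, h, j₃, hj₃⟩
    obtain ⟨ia, hia0, ja, hja⟩ := hia
    obtain ⟨ib, hib0, jb, hjb⟩ := hib
    exact hdisj _ _ (outXY ia ja (hnbr ia hia0) hry hja) (inXY ib jb (hnbr ib hib0) hrx hjb)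
  have commonCase : r ∉ (⋃ i, Sbr k i) → False := by
    intro hr
    have hcommon : ∃ i, (∃ j, Vtx.z i j ∈ Bout) ∧ (∃ j, Vtx.z i j ∈ Bin) := by
      rcases pick3 i₁ i₂ i₃ i₄ h12 h34 with h | h | h | h
      · exact ⟨i₁, ⟨j₁, hj₁⟩, ⟨j₃, h ▸ hj₃⟩⟩
      · exact ⟨i₁, ⟨j₁, hj₁⟩, ⟨j₄, h ▸ hj₄⟩⟩
      · exact ⟨i₂, ⟨j₂, hj₂⟩, ⟨j₃, h ▸ hj₃⟩⟩
      · exact ⟨i₂, ⟨j₂, hj₂⟩, ⟨j₄, h ▸ hj₄⟩⟩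
    obtain ⟨i, ⟨jo, hjo⟩, ⟨ji, hji⟩⟩ := hcommon
    have hrS : r ∉ Sbr k i := fun h => hr (Set.mem_iUnion.2 ⟨i, h⟩)
    have h1 := outXiYi i jo (fun h => hrS (by
      rcases Set.mem_insert_iff.1 h with h' | h'
      · exact Set.mem_insert_iff.2 (Or.inr (Set.mem_insert_iff.2 (Or.inl h')))
      · exact Set.mem_insert_iff.2 (Or.inr (Set.mem_insert_iff.2 (Or.inr h'))))) hjo
    have h2 := inXiYi i ji (fun h => hrS (by
      rcases Set.mem_insert_iff.1 h with h' | h'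
      · exact Set.mem_insert_iff.2 (Or.inl h')
      · exact Set.mem_insert_iff.2 (Or.inr (Set.mem_insert_iff.2 (Or.inr h'))))) hji
    exact hdisj _ _ h1 h2
  cases r with
  | x => exact commonCase (by simp [Sbr])
  | y => exact commonCase (by simp [Sbr])
  | xi i₀ => exact branchCase i₀ (fun i hi => by simp [Sbr, hi, Ne.symm hi]) (by simp) (by simp)
  | yi i₀ => exact branchCase i₀ (fun i hi => by simp [Sbr, hi, Ne.symm hi]) (by simp) (by simp)
  | z i₀ j₀ => exact branchCase i₀ (fun i hi => by simp [Sbr, hi, Ne.symm hi]) (by simp) (by simp)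
end
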